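/- Let H ≤ PL₊(I) be a group with no transition chains of length two, and let h, k ∈ H satisfy the mutual efficiency condition. Set f = [[h,k],k]. Then every orbital of h properly contained in an orbital of k is an orbital of f, and every orbital of f is properly contained in an orbital of k that contains an orbital of h. -/

import Mathlib

/-- The support of a map of the line: points it moves. -/
def Supp (f : ℝ → ℝ) : Set ℝ := {x | f x ≠ x}

/-- `A` is an orbital of `f`: a connected component of the support of `f`. -/
def IsOrbital (f : ℝ → ℝ) (A : Set ℝ) : Prop :=
  ∃ x ∈ Supp f, A = connectedComponentIn (Supp f) x

/-- An orientation-preserving homeomorphism of `[0,1]`, encoded as a strictly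
increasing bijection of `ℝ` fixing every point outside `(0,1)`. -/
def Homeo01 (f : Equiv.Perm ℝ) : Prop :=
  StrictMono f ∧ ∀ x ∉ Set.Ioo (0:ℝ) 1, f x = x

/-- `f` is affine in a neighbourhood of `x`. -/
def LocallyAffineAt (f : ℝ → ℝ) (x : ℝ) : Prop :=
  ∃ ε > 0, ∃ m b : ℝ, ∀ y : ℝ, |y - x| < ε → f y = m * y + b

/-- Piecewise linear with finitely many breakpoints. -/
def IsPL (f : ℝ → ℝ) : Prop := {x | ¬ LocallyAffineAt f x}.Finite

/-- Membership in `PL₊(I)`. -/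
def PLHomeo (f : Equiv.Perm ℝ) : Prop := Homeo01 f ∧ IsPL f

/-- Support of the action of a subgroup. -/
def GSupp (G : Subgroup (Equiv.Perm ℝ)) : Set ℝ := {x | ∃ g ∈ G, g x ≠ x}

/-- An orbital of a subgroup: a component of the support of its action. -/
def IsGroupOrbital (G : Subgroup (Equiv.Perm ℝ)) (A : Set ℝ) : Prop :=
  ∃ x ∈ GSupp G, A = connectedComponentIn (GSupp G) x

/-- `b` is a breakpoint of `f`: one-sided derivatives exist but differ. -/
def Breakpoint (f : ℝ → ℝ) (b : ℝ) : Prop :=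
  b ∈ Set.Ioo (0:ℝ) 1 ∧
  DifferentiableWithinAt ℝ f (Set.Iio b) b ∧
  DifferentiableWithinAt ℝ f (Set.Ioi b) b ∧
  derivWithin f (Set.Iio b) b ≠ derivWithin f (Set.Ioi b) b

/-- `G` admits a transition chain of length two. -/
def HasTransitionChain2 (G : Subgroup (Equiv.Perm ℝ)) : Prop :=
  ∃ g ∈ G, ∃ h ∈ G, ∃ a₁ b₁ a₂ b₂ : ℝ,
    IsOrbital g (Set.Ioo a₁ a₂) ∧ IsOrbital h (Set.Ioo b₁ b₂) ∧
    a₁ < b₁ ∧ b₁ < a₂ ∧ a₂ < b₂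

/-- A tower of the subgroup `G`: a set of signed orbitals `(A, g)` whose orbitals
form a chain under inclusion, with exactly one signature per orbital. -/
def IsTower (G : Subgroup (Equiv.Perm ℝ)) (T : Set (Set ℝ × Equiv.Perm ℝ)) : Prop :=
  (∀ p ∈ T, p.2 ∈ G ∧ IsOrbital p.2 p.1) ∧
  (∀ p ∈ T, ∀ q ∈ T, p.1 ⊆ q.1 ∨ q.1 ⊆ p.1) ∧
  (∀ p ∈ T, ∀ q ∈ T, p.1 = q.1 → p = q)

/-- The depth of `G` equals `n`: there is a tower of height `n` and every tower
is finite with height at most `n`. -/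
def DepthEq (G : Subgroup (Equiv.Perm ℝ)) (n : ℕ) : Prop :=
  (∃ T, IsTower G T ∧ T.Finite ∧ T.ncard = n) ∧
  ∀ T, IsTower G T → T.Finite ∧ T.ncard ≤ n

/-- The mutual efficiency condition. -/
def MutualEff (h k : Equiv.Perm ℝ) : Prop :=
  (∀ C : Set ℝ, IsOrbital ⇑h C → (∃ A, IsOrbital ⇑k A ∧ A ⊂ C) →
    ∃ x ∈ C, Supp ⇑k ∩ C ⊆ Set.uIcc x (h x)) ∧
  (∀ D : Set ℝ, IsOrbital ⇑k D → (∃ A, IsOrbital ⇑h A ∧ A ⊂ D) →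
    ∃ x ∈ D, Supp ⇑h ∩ D ⊆ Set.uIcc x (k x))

open scoped commutatorElement

/-!
Write `f = ⁅⁅h, k⁆, k⁆`. Orbitals of elements of `PL₊(I)` are open intervals, and in the absence
of transition chains two orbitals that meet are nested. If an orbital `C` of `k` properly contains
an orbital of `h`, mutual efficiency confines the support of `h` in `C` to a fundamental domain
`J` of `k`; as `J`, `k J`, `k² J` are disjoint, `f = h` on the closure of `J`, so the orbitals
of `h` inside `C` are orbitals of `f`. If instead `k` is supported in a fundamental domain `J` of
an orbital `A` of `h`, then `f = ⁅h k h⁻¹, k⁆` is the identity on `A`, since `h k h⁻¹` and `k`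
have disjoint supports there. Hence a point moved by `f` lies in an orbital `C` of `k` that
contains every orbital of `h` it meets. Then `h`, `k` and `f` fix the ends of `C`, so an orbital
`B` of `f` through the point lies in `C`; and `B ≠ C`, because either an orbital of `h` properly
inside `C` is an orbital of `f`, or `C` is an orbital of `h` as well, and then near an end of `C`
both `h` and `k` are linear maps fixing it, so that `f` is the identity there.
-/

open Set Filter Topology

namespace Equiv.Perm

variable {α : Type*}

theorem apply_inv_self (p : Perm α) (y : α) : p (p⁻¹ y) = y := p.apply_symm_apply y

theorem commutatorElement_apply (p q : Perm α) (y : α) : ⁅p, q⁆ y = p (q (p⁻¹ (q⁻¹ y))) := rfl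

theorem commutatorElement_commutatorElement_apply_of_apply_eq (p q : Perm α) {y : α}
    (h₁ : p (q⁻¹ y) = q⁻¹ y) (h₂ : p (q⁻¹ (q⁻¹ y)) = q⁻¹ (q⁻¹ y)) :
    ⁅⁅p, q⁆, q⁆ y = p y := by
  have h₁' : p⁻¹ (q⁻¹ y) = q⁻¹ y := inv_eq_iff_eq.2 h₁.symm
  have hinv : ⁅p, q⁆⁻¹ (q⁻¹ y) = q⁻¹ y := by
    rw [commutatorElement_inv, commutatorElement_apply, h₁', h₂, apply_inv_self]
  rw [commutatorElement_apply, hinv, apply_inv_self, commutatorElement_apply, h₁', apply_inv_self]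

theorem commutatorElement_commutatorElement_apply_eq_self_of_apply_eq {p q : Perm α} {y : α}
    (hp : p y = y) (hq : q y = y) : ⁅⁅p, q⁆, q⁆ y = y := by
  have hq' : q⁻¹ y = y := inv_eq_iff_eq.2 hq.symm
  rw [commutatorElement_commutatorElement_apply_of_apply_eq p q (by rwa [hq'])
    (by rwa [hq', hq']), hp]

theorem commutatorElement_apply_eq_self_of_disjointOn {c b : Perm α} {U : Set α}
    (hb : MapsTo b U U) (hb' : MapsTo ⇑b⁻¹ U U) (hc' : MapsTo ⇑c⁻¹ U U)
    (hdisj : ∀ w ∈ U, c w = w ∨ b w = w) {y : α} (hy : y ∈ U) : ⁅c, b⁆ y = y := by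
  set w := c⁻¹ (b⁻¹ y)
  have hcw : c w = b⁻¹ y := apply_inv_self c _
  have hcomm : c (b w) = b (c w) := by
    rcases hdisj w (hc' (hb' hy)) with hw | hw <;> rw [hw]
    · rcases hdisj (b w) (hb (hc' (hb' hy))) with hbw | hbw
      · exact hbw
      · rw [b.injective hbw, hw]
    · rcases hdisj (c w) (hcw ▸ hb' hy) with hcw' | hcw'
      · rw [c.injective hcw', hw]
      · exact hcw'.symm
  rw [commutatorElement_apply, hcomm, hcw, apply_inv_self]

theorem commutatorElement_commutatorElement_apply_eq_self_of_wandering {t b : Perm α} {U J : Set α}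
    (ht : MapsTo t U U) (ht' : MapsTo ⇑t⁻¹ U U) (hb : MapsTo b U U) (hb' : MapsTo ⇑b⁻¹ U U)
    (hbJ : ∀ w ∈ U, w ∉ J → b w = w) (hJ : ∀ w ∈ J, t⁻¹ w ∉ J) {y : α} (hy : y ∈ U) :
    ⁅⁅t, b⁆, b⁆ y = y := by
  -- On `U`, `t b t⁻¹` is supported in `t J`, which misses the support `J` of `b`.
  have hcomm : ⁅⁅t, b⁆, b⁆ = ⁅t * b * t⁻¹, b⁆ := by simp only [commutatorElement_def]; group
  rw [hcomm]
  refine commutatorElement_apply_eq_self_of_disjointOn hb hb' ?_ (fun w hw => ?_) hy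
  · simpa [mul_assoc] using ht.comp (hb'.comp ht')
  · by_cases hwJ : w ∈ J
    · left
      rw [mul_apply, mul_apply, hbJ _ (ht' hw) (hJ w hwJ), apply_inv_self]
    · exact Or.inr (hbJ w hw hwJ)

end Equiv.Perm

theorem Set.OrdConnected.subset_Ioo {α : Type*} [LinearOrder α] {s : Set α} (hs : s.OrdConnected)
    {a b y : α} (hys : y ∈ s) (hy : y ∈ Ioo a b) (ha : a ∉ s) (hb : b ∉ s) : s ⊆ Ioo a b :=
  fun _ hz => ⟨lt_of_not_ge fun hza => ha (hs.out hz hys ⟨hza, hy.1.le⟩),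
    lt_of_not_ge fun hbz => hb (hs.out hys hz ⟨hy.2.le, hbz⟩)⟩

theorem Set.Ioo_subset_or_subset_or_overlap {α : Type*} [LinearOrder α] [DenselyOrdered α]
    {a₁ a₂ c₁ c₂ : α} (h : (Ioo a₁ a₂ ∩ Ioo c₁ c₂).Nonempty) :
    Ioo a₁ a₂ ⊆ Ioo c₁ c₂ ∨ Ioo c₁ c₂ ⊆ Ioo a₁ a₂ ∨
      (a₁ < c₁ ∧ c₁ < a₂ ∧ a₂ < c₂) ∨ (c₁ < a₁ ∧ a₁ < c₂ ∧ c₂ < a₂) := by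
  obtain ⟨y, ⟨ha₁, ha₂⟩, hc₁, hc₂⟩ := h
  rw [Ioo_subset_Ioo_iff (ha₁.trans ha₂), Ioo_subset_Ioo_iff (hc₁.trans hc₂)]
  grind

section Orbital

variable {f : ℝ → ℝ} {A B : Set ℝ}

theorem Continuous.isOpen_supp (hf : Continuous f) : IsOpen (Supp f) :=
  isOpen_ne_fun hf continuous_id

theorem IsOrbital.subset_supp (hA : IsOrbital f A) : A ⊆ Supp f := by
  obtain ⟨x, -, rfl⟩ := hA
  exact connectedComponentIn_subset _ _

theorem IsOrbital.eq_of_mem (hA : IsOrbital f A) (hB : IsOrbital f B) {y : ℝ} (hyA : y ∈ A)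
    (hyB : y ∈ B) : A = B := by
  obtain ⟨x, -, rfl⟩ := hA
  obtain ⟨x', -, rfl⟩ := hB
  rw [connectedComponentIn_eq hyA, connectedComponentIn_eq hyB]

theorem isOrbital_connectedComponentIn {y : ℝ} (hy : y ∈ Supp f) :
    IsOrbital f (connectedComponentIn (Supp f) y) :=
  ⟨y, hy, rfl⟩

theorem isOrbital_Ioo_iff {a b : ℝ} (hab : a < b) :
    IsOrbital f (Ioo a b) ↔ Ioo a b ⊆ Supp f ∧ f a = a ∧ f b = b := by
  constructor
  · rintro ⟨x, hx, hAx⟩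
    have hxA : x ∈ Ioo a b := hAx ▸ mem_connectedComponentIn hx
    have hsub : Ioo a b ⊆ Supp f := hAx ▸ connectedComponentIn_subset _ _
    refine ⟨hsub, by_contra fun ha => ?_, by_contra fun hb => ?_⟩
    · have : Ico a b ⊆ Ioo a b := hAx ▸ isPreconnected_Ico.subset_connectedComponentIn
        ⟨hxA.1.le, hxA.2⟩ (Ioo_insert_left hab ▸ insert_subset ha hsub)
      exact (this (left_mem_Ico.2 hab)).1.false
    · have : Ioc a b ⊆ Ioo a b := hAx ▸ isPreconnected_Ioc.subset_connectedComponentIn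
        ⟨hxA.1, hxA.2.le⟩ (Ioo_insert_right hab ▸ insert_subset hb hsub)
      exact (this (right_mem_Ioc.2 hab)).2.false
  · rintro ⟨hsub, ha, hb⟩
    have hmid : (a + b) / 2 ∈ Ioo a b := ⟨by linarith, by linarith⟩
    refine ⟨_, hsub hmid, (isPreconnected_Ioo.subset_connectedComponentIn hmid hsub).antisymm ?_⟩
    refine isPreconnected_connectedComponentIn.ordConnected.subset_Ioo
      (mem_connectedComponentIn (hsub hmid)) hmid ?_ ?_
    · exact fun h => connectedComponentIn_subset _ _ h ha
    · exact fun h => connectedComponentIn_subset _ _ h hb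

theorem IsOrbital.exists_eq_Ioo (hf : Continuous f) (hbdd : Bornology.IsBounded (Supp f))
    (hA : IsOrbital f A) : ∃ a b, a < b ∧ A = Ioo a b ∧ f a = a ∧ f b = b := by
  obtain ⟨x, hx, hAx⟩ := hA
  have hxA : x ∈ A := hAx ▸ mem_connectedComponentIn hx
  have hopen : IsOpen A := hAx ▸ hf.isOpen_supp.connectedComponentIn
  have hAb : Bornology.IsBounded A := hbdd.subset (hAx ▸ connectedComponentIn_subset _ _)
  have hinf : sInf A ∉ A := fun h => by
    obtain ⟨y, hy, hyA⟩ := Filter.Eventually.exists_lt (hopen.mem_nhds h)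
    exact (csInf_le hAb.bddBelow hyA).not_gt hy
  have hsup : sSup A ∉ A := fun h => by
    obtain ⟨y, hy, hyA⟩ := Filter.Eventually.exists_gt (hopen.mem_nhds h)
    exact (le_csSup hAb.bddAbove hyA).not_gt hy
  have hAeq : A = Ioo (sInf A) (sSup A) := by
    refine Subset.antisymm (fun y hy => ⟨?_, ?_⟩) ?_
    · exact (csInf_le hAb.bddBelow hy).lt_of_ne fun h => hinf (h ▸ hy)
    · exact (le_csSup hAb.bddAbove hy).lt_of_ne fun h => hsup (h ▸ hy)
    · exact IsConnected.Ioo_csInf_csSup_subset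
        ⟨⟨x, hxA⟩, hAx ▸ isPreconnected_connectedComponentIn⟩ hAb.bddBelow hAb.bddAbove
  have hxA' : x ∈ Ioo (sInf A) (sSup A) := hAeq ▸ hxA
  have hab : sInf A < sSup A := hxA'.1.trans hxA'.2
  have hA : IsOrbital f (Ioo (sInf A) (sSup A)) := hAeq ▸ ⟨x, hx, hAx⟩
  exact ⟨_, _, hab, hAeq, ((isOrbital_Ioo_iff hab).1 hA).2⟩

end Orbital

namespace Homeo01

variable {g : Equiv.Perm ℝ}

theorem continuous (hg : Homeo01 g) : Continuous g :=
  hg.1.monotone.continuous_of_surjective g.surjective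

theorem isBounded_supp (hg : Homeo01 g) : Bornology.IsBounded (Supp g) :=
  (Metric.isBounded_Ioo 0 1).subset fun x hx => by_contra fun h => hx (hg.2 x h)

theorem inv (hg : Homeo01 g) : Homeo01 g⁻¹ :=
  ⟨fun a b hab => hg.1.lt_iff_lt.1 (by simpa using hab),
    fun x hx => Equiv.Perm.inv_eq_iff_eq.2 (hg.2 x hx).symm⟩

theorem mapsTo_Ioo (hg : Homeo01 g) {a b : ℝ} (ha : g a = a) (hb : g b = b) :
    MapsTo g (Ioo a b) (Ioo a b) := by
  simpa [ha, hb] using hg.1.mapsTo_Ioo (a := a) (b := b)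

theorem inv_mapsTo_Ioo (hg : Homeo01 g) {a b : ℝ} (ha : g a = a) (hb : g b = b) :
    MapsTo ⇑g⁻¹ (Ioo a b) (Ioo a b) :=
  hg.inv.mapsTo_Ioo (Equiv.Perm.inv_eq_iff_eq.2 ha.symm) (Equiv.Perm.inv_eq_iff_eq.2 hb.symm)

theorem isOrbital_exists_eq_Ioo (hg : Homeo01 g) {A : Set ℝ} (hA : IsOrbital g A) :
    ∃ a b, a < b ∧ A = Ioo a b ∧ g a = a ∧ g b = b :=
  hA.exists_eq_Ioo hg.continuous hg.isBounded_supp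

theorem isOrbital_inv_mapsTo (hg : Homeo01 g) {A : Set ℝ} (hA : IsOrbital g A) :
    MapsTo ⇑g⁻¹ A A := by
  obtain ⟨a, b, -, rfl, ha, hb⟩ := hg.isOrbital_exists_eq_Ioo hA
  exact hg.inv_mapsTo_Ioo ha hb

end Homeo01

theorem IsOrbital.subset_or_subset {H : Subgroup (Equiv.Perm ℝ)} (hH : ∀ g ∈ H, Homeo01 g)
    (hnc : ¬ HasTransitionChain2 H) {p q : Equiv.Perm ℝ} (hp : p ∈ H) (hq : q ∈ H)
    {A C : Set ℝ} (hA : IsOrbital p A) (hC : IsOrbital q C) (hAC : (A ∩ C).Nonempty) :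
    A ⊆ C ∨ C ⊆ A := by
  obtain ⟨a₁, a₂, -, rfl, -⟩ := (hH p hp).isOrbital_exists_eq_Ioo hA
  obtain ⟨c₁, c₂, -, rfl, -⟩ := (hH q hq).isOrbital_exists_eq_Ioo hC
  rcases Ioo_subset_or_subset_or_overlap hAC with h | h | h | h
  · exact Or.inl h
  · exact Or.inr h
  · exact (hnc ⟨p, hp, q, hq, a₁, c₁, a₂, c₂, hA, hC, h⟩).elim
  · exact (hnc ⟨q, hq, p, hp, c₁, a₁, c₂, a₂, hC, hA, h⟩).elim

theorem apply_eq_self_of_supp_inter_subset_uIcc {p : ℝ → ℝ} (hp : Continuous p)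
    {c₁ c₂ x x' : ℝ} (hx : x ∈ Ioo c₁ c₂) (hx' : x' ∈ Ioo c₁ c₂)
    (hsupp : Supp p ∩ Ioo c₁ c₂ ⊆ uIcc x x') : ∀ y ∈ Icc c₁ c₂, y ∉ uIoo x x' → p y = y := by
  intro y hy hyJ
  set m := x ⊓ x'
  set M := x ⊔ x'
  have hm : c₁ < m := lt_inf_iff.2 ⟨hx.1, hx'.1⟩
  have hM : M < c₂ := sup_lt_iff.2 ⟨hx.2, hx'.2⟩
  have hmM : m ≤ M := inf_le_sup
  have hfix : EqOn p id (Ioo c₁ m ∪ Ioo M c₂) := by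
    intro z hz
    by_contra hpz
    have hzC : z ∈ Ioo c₁ c₂ := by
      rcases hz with hz | hz
      · exact ⟨hz.1, by linarith [hz.2]⟩
      · exact ⟨by linarith [hz.1], hz.2⟩
    have hzJ : z ∈ Icc m M := hsupp ⟨hpz, hzC⟩
    rcases hz with hz | hz
    · linarith [hz.2, hzJ.1]
    · linarith [hz.1, hzJ.2]
  have hcl := hfix.closure hp continuous_id
  rw [closure_union, closure_Ioo hm.ne, closure_Ioo hM.ne] at hcl
  apply hcl
  by_cases hym : y ≤ m
  · exact Or.inl ⟨hy.1, hym⟩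
  · exact Or.inr ⟨le_of_not_gt fun hyM => hyJ ⟨lt_of_not_ge hym, hyM⟩, hy.2⟩

theorem inv_apply_notMem_uIoo {q : Equiv.Perm ℝ} (hq : StrictMono q) {x y : ℝ}
    (hy : y ∈ uIcc x (q x)) : q⁻¹ y ∉ uIoo x (q x) ∧ q⁻¹ (q⁻¹ y) ∉ uIoo x (q x) := by
  have hq' : Monotone ⇑q⁻¹ := fun a b hab => hq.le_iff_le.1 (by simpa using hab)
  have hqx : q⁻¹ (q x) = x := q.symm_apply_apply x
  rcases le_total x (q x) with h | h
  · rw [uIcc_of_le h] at hy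
    rw [uIoo_of_le h]
    have h₁ : q⁻¹ y ≤ x := (hq' hy.2).trans_eq hqx
    have h₂ : q⁻¹ (q⁻¹ y) ≤ x := (hq' h₁).trans ((hq' h).trans_eq hqx)
    exact ⟨fun h' => h'.1.not_ge h₁, fun h' => h'.1.not_ge h₂⟩
  · rw [uIcc_of_ge h] at hy
    rw [uIoo_of_ge h]
    have h₁ : x ≤ q⁻¹ y := hqx.symm.trans_le (hq' hy.1)
    have h₂ : x ≤ q⁻¹ (q⁻¹ y) := (hqx.symm.trans_le (hq' h)).trans (hq' h₁)
    exact ⟨fun h' => h'.2.not_ge h₁, fun h' => h'.2.not_ge h₂⟩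

theorem apply_eq_self_of_forall_orbital_subset {g : ℝ → ℝ} (hg : IsOpen (Supp g)) {C : Set ℝ}
    (hC : ∀ A, IsOrbital g A → (A ∩ C).Nonempty → A ⊆ C) {c : ℝ} (hc : c ∈ closure C)
    (hcC : c ∉ C) : g c = c := by
  by_contra hgc
  have hcA := mem_connectedComponentIn (show c ∈ Supp g from hgc)
  exact hcC (hC _ (isOrbital_connectedComponentIn hgc)
    (mem_closure_iff.1 hc _ hg.connectedComponentIn hcA) hcA)

section LinearGerm

theorem LocallyAffineAt.eventually_hasDerivAt {g : ℝ → ℝ} {y : ℝ} (hg : LocallyAffineAt g y) :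
    ∃ s, ∀ᶠ z in 𝓝 y, HasDerivAt g s z := by
  obtain ⟨ε, hε, s, b, hgy⟩ := hg
  refine ⟨s, ?_⟩
  filter_upwards [Metric.isOpen_ball.mem_nhds (Metric.mem_ball_self hε)] with z hz
  have hgz : g =ᶠ[𝓝 z] fun w => s * w + b := by
    filter_upwards [Metric.isOpen_ball.mem_nhds hz] with w hw
    exact hgy w (by simpa [Real.dist_eq] using hw)
  simpa using (((hasDerivAt_id z).const_mul s).add_const b).congr_of_eventuallyEq hgz

theorem IsOpen.exists_eqOn_affine_of_locallyAffineAt {g : ℝ → ℝ} {U : Set ℝ} (hU : IsOpen U)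
    (hU' : IsPreconnected U) (hg : ∀ y ∈ U, LocallyAffineAt g y) :
    ∃ s a, EqOn g (fun y => s * y + a) U := by
  choose s hs using fun y (hy : y ∈ U) => (hg y hy).eventually_hasDerivAt
  have hdiff : DifferentiableOn ℝ g U := fun y hy =>
    (hs y hy).self_of_nhds.differentiableAt.differentiableWithinAt
  have hderiv : ∀ y (hy : y ∈ U), HasDerivAt (deriv g) 0 y := fun y hy =>
    (hasDerivAt_const y (s y hy)).congr_of_eventuallyEq ((hs y hy).mono fun _ hz => hz.deriv)
  obtain ⟨s₀, hs₀⟩ := hU.exists_is_const_of_deriv_eq_zero hU'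
    (fun y hy => (hderiv y hy).differentiableAt.differentiableWithinAt)
    (fun y hy => (hderiv y hy).deriv)
  obtain ⟨a, ha⟩ := hU.exists_eq_add_of_deriv_eq hU' hdiff (g := fun y => s₀ * y)
    (by fun_prop) (fun y hy => by simp [hs₀ y hy])
  exact ⟨s₀, a, ha⟩

theorem IsPL.eventually_locallyAffineAt {g : ℝ → ℝ} (hg : IsPL g) (c : ℝ) :
    ∀ᶠ y in 𝓝[≠] c, LocallyAffineAt g y := by
  have hcl : IsClosed ({x | ¬ LocallyAffineAt g x} \ {c}) := (hg.subset sdiff_subset).isClosed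
  filter_upwards [nhdsWithin_le_nhds (hcl.compl_mem_nhds fun h => h.2 rfl), self_mem_nhdsWithin]
    with y h₁ h₂
  exact by_contra fun h => h₁ ⟨h, h₂⟩

def HasLinearRightGermAt (g : ℝ → ℝ) (s c : ℝ) : Prop :=
  0 < s ∧ ∀ᶠ y in 𝓝[>] c, g y = c + s * (y - c)

theorem tendsto_affine_nhdsGT {s : ℝ} (hs : 0 < s) (c : ℝ) :
    Tendsto (fun y => c + s * (y - c)) (𝓝[>] c) (𝓝[>] c) := by
  refine tendsto_nhdsWithin_of_tendsto_nhds_of_eventually_within _ ?_ ?_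
  · have : Continuous fun y => c + s * (y - c) := by fun_prop
    simpa using (this.tendsto c).mono_left nhdsWithin_le_nhds
  · filter_upwards [self_mem_nhdsWithin] with y (hy : c < y)
    have := mul_pos hs (sub_pos.2 hy)
    exact (lt_add_iff_pos_right c).2 this

theorem IsPL.hasLinearRightGermAt {g : ℝ → ℝ} (hpl : IsPL g) (hmono : StrictMono g)
    (hcont : Continuous g) {c : ℝ} (hc : g c = c) : ∃ s, HasLinearRightGermAt g s c := by
  obtain ⟨m, hcm : c < m, hm⟩ := mem_nhdsGT_iff_exists_Ioo_subset.1
    ((hpl.eventually_locallyAffineAt c).filter_mono (nhdsGT_le_nhdsNE c))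
  obtain ⟨s, a, ha⟩ := isOpen_Ioo.exists_eqOn_affine_of_locallyAffineAt isPreconnected_Ioo hm
  have hac : c = s * c + a := by
    have := (ha.closure hcont (by fun_prop)) (closure_Ioo hcm.ne ▸ left_mem_Icc.2 hcm.le)
    rwa [hc] at this
  have hs : 0 < s := by
    have h₁ : c + (m - c) / 3 ∈ Ioo c m := ⟨by linarith, by linarith⟩
    have h₂ : c + 2 * (m - c) / 3 ∈ Ioo c m := ⟨by linarith, by linarith⟩
    have := hmono (show c + (m - c) / 3 < c + 2 * (m - c) / 3 by linarith)
    rw [ha h₁, ha h₂] at this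
    nlinarith
  refine ⟨s, hs, ?_⟩
  filter_upwards [Ioo_mem_nhdsGT hcm] with y hy
  rw [ha hy]
  linarith

namespace HasLinearRightGermAt

variable {g g' : ℝ → ℝ} {s s' c : ℝ}

theorem tendsto (hg : HasLinearRightGermAt g s c) : Tendsto g (𝓝[>] c) (𝓝[>] c) :=
  (tendsto_affine_nhdsGT hg.1 c).congr' (hg.2.mono fun _ hy => hy.symm)

theorem comp (hg : HasLinearRightGermAt g s c) (hg' : HasLinearRightGermAt g' s' c) :
    HasLinearRightGermAt (g ∘ g') (s * s') c := by
  refine ⟨mul_pos hg.1 hg'.1, ?_⟩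
  filter_upwards [hg'.2, hg'.tendsto.eventually hg.2] with y h₁ h₂
  rw [Function.comp_apply, h₂, h₁]
  ring

theorem perm_inv {g : Equiv.Perm ℝ} (hg : HasLinearRightGermAt g s c) :
    HasLinearRightGermAt ⇑g⁻¹ s⁻¹ c := by
  refine ⟨inv_pos.2 hg.1, ?_⟩
  filter_upwards [(tendsto_affine_nhdsGT (inv_pos.2 hg.1) c).eventually hg.2] with y hy
  rw [Equiv.Perm.inv_eq_iff_eq, hy, add_sub_cancel_left, mul_inv_cancel_left₀ hg.1.ne',
    add_sub_cancel]

theorem commutatorElement {a b : Equiv.Perm ℝ} (ha : HasLinearRightGermAt a s c)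
    (hb : HasLinearRightGermAt b s' c) : HasLinearRightGermAt ⇑⁅a, b⁆ 1 c := by
  have := ((ha.comp hb).comp ha.perm_inv).comp hb.perm_inv
  rwa [show s * s' * s⁻¹ * s'⁻¹ = 1 by field_simp [ha.1.ne', hb.1.ne']] at this

theorem eventually_eq_self (hg : HasLinearRightGermAt g 1 c) : ∀ᶠ y in 𝓝[>] c, g y = y :=
  hg.2.mono fun y hy => by rw [hy]; ring

end HasLinearRightGermAt

end LinearGerm

section Commutator

open Equiv.Perm

variable {h k : Equiv.Perm ℝ}

theorem commutator_commutator_eqOn_uIcc (hh : Continuous h) (hk : Homeo01 k) {C : Set ℝ}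
    (hC : IsOrbital k C) {x : ℝ} (hx : x ∈ C) (hsupp : Supp h ∩ C ⊆ uIcc x (k x)) :
    EqOn ⇑⁅⁅h, k⁆, k⁆ h (uIcc x (k x)) := by
  have hk' := hk.isOrbital_inv_mapsTo hC
  obtain ⟨c₁, c₂, -, rfl, hkc₁, hkc₂⟩ := hk.isOrbital_exists_eq_Ioo hC
  have hkx : k x ∈ Ioo c₁ c₂ := hk.mapsTo_Ioo hkc₁ hkc₂ hx
  have hfix := apply_eq_self_of_supp_inter_subset_uIcc hh hx hkx hsupp
  intro y hy
  have hyC : y ∈ Ioo c₁ c₂ := ordConnected_Ioo.uIcc_subset hx hkx hy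
  obtain ⟨h₁, h₂⟩ := inv_apply_notMem_uIoo hk.1 hy
  exact commutatorElement_commutatorElement_apply_of_apply_eq h k
    (hfix _ (Ioo_subset_Icc_self (hk' hyC)) h₁) (hfix _ (Ioo_subset_Icc_self (hk' (hk' hyC))) h₂)

theorem commutator_commutator_apply_eq_self_of_forall_apply_eq (hk : Homeo01 k) {C : Set ℝ}
    (hC : IsOrbital k C) (hfix : ∀ z ∈ C, h z = z) {y : ℝ} (hy : y ∈ C) : ⁅⁅h, k⁆, k⁆ y = y :=
  have hk' := hk.isOrbital_inv_mapsTo hC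
  (commutatorElement_commutatorElement_apply_of_apply_eq h k (hfix _ (hk' hy))
    (hfix _ (hk' (hk' hy)))).trans (hfix y hy)

theorem isOrbital_commutator_commutator_of_ssubset (hh : Homeo01 h) (hk : Homeo01 k)
    (hme : MutualEff h k) {A C : Set ℝ} (hA : IsOrbital h A) (hC : IsOrbital k C) (hAC : A ⊂ C) :
    IsOrbital ⇑⁅⁅h, k⁆, k⁆ A := by
  obtain ⟨x, hx, hsupp⟩ := hme.2 C hC ⟨A, hA, hAC⟩
  have hAJ : closure A ⊆ uIcc x (k x) :=
    closure_minimal (fun y hy => hsupp ⟨hA.subset_supp hy, hAC.subset hy⟩) isClosed_Icc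
  obtain ⟨a₁, a₂, ha, rfl, -⟩ := hh.isOrbital_exists_eq_Ioo hA
  rw [closure_Ioo ha.ne] at hAJ
  have heq := (commutator_commutator_eqOn_uIcc hh.continuous hk hC hx hsupp).mono hAJ
  obtain ⟨hsub, ha₁, ha₂⟩ := (isOrbital_Ioo_iff ha).1 hA
  refine (isOrbital_Ioo_iff ha).2 ⟨fun y hy => ?_, ?_, ?_⟩
  · change ⁅⁅h, k⁆, k⁆ y ≠ y
    rw [heq (Ioo_subset_Icc_self hy)]
    exact hsub hy
  · rw [heq (left_mem_Icc.2 ha.le), ha₁]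
  · rw [heq (right_mem_Icc.2 ha.le), ha₂]

theorem commutator_commutator_apply_eq_self_of_supp_inter_subset_uIcc (hh : Homeo01 h)
    (hk : Homeo01 k) {A : Set ℝ} (hA : IsOrbital h A) {x : ℝ} (hx : x ∈ A)
    (hsupp : Supp k ∩ A ⊆ uIcc x (h x)) {y : ℝ} (hy : y ∈ A) : ⁅⁅h, k⁆, k⁆ y = y := by
  obtain ⟨a, b, hab, rfl, ha, hb⟩ := hh.isOrbital_exists_eq_Ioo hA
  have hhx : h x ∈ Ioo a b := hh.mapsTo_Ioo ha hb hx
  have hfix := apply_eq_self_of_supp_inter_subset_uIcc hk.continuous hx hhx hsupp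
  have hJ : uIoo x (h x) ⊆ Ioo a b := uIoo_subset_Ioo (Ioo_subset_Icc_self hx)
    (Ioo_subset_Icc_self hhx)
  have hka : k a = a := hfix _ (left_mem_Icc.2 hab.le) fun h' => (hJ h').1.false
  have hkb : k b = b := hfix _ (right_mem_Icc.2 hab.le) fun h' => (hJ h').2.false
  exact commutatorElement_commutatorElement_apply_eq_self_of_wandering (hh.mapsTo_Ioo ha hb)
    (hh.inv_mapsTo_Ioo ha hb) (hk.mapsTo_Ioo hka hkb) (hk.inv_mapsTo_Ioo hka hkb)
    (fun w hw => hfix w (Ioo_subset_Icc_self hw))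
    (fun w hw => (inv_apply_notMem_uIoo hh.1 (uIoo_subset_uIcc_self hw)).1) hy

theorem commutator_commutator_apply_eq_self_of_forall_not_subset {H : Subgroup (Equiv.Perm ℝ)}
    (hH : ∀ g ∈ H, Homeo01 g) (hnc : ¬ HasTransitionChain2 H) (hhH : h ∈ H) (hkH : k ∈ H)
    (hme : MutualEff h k) {A : Set ℝ} (hA : IsOrbital h A) (hAD : ∀ D, IsOrbital k D → ¬ A ⊆ D)
    {y : ℝ} (hy : y ∈ A) : ⁅⁅h, k⁆, k⁆ y = y := by
  suffices ∃ x ∈ A, Supp k ∩ A ⊆ uIcc x (h x) by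
    obtain ⟨x, hx, hsupp⟩ := this
    exact commutator_commutator_apply_eq_self_of_supp_inter_subset_uIcc (hH h hhH) (hH k hkH) hA
      hx hsupp hy
  by_cases hkA : ∃ z ∈ Supp k, z ∈ A
  · obtain ⟨z, hzk, hzA⟩ := hkA
    have hD := isOrbital_connectedComponentIn hzk
    rcases hD.subset_or_subset hH hnc hkH hhH hA ⟨z, mem_connectedComponentIn hzk, hzA⟩ with
      hDA | hAD'
    · exact hme.1 A hA ⟨_, hD, hDA.ssubset_of_ne fun h' => hAD _ hD h'.ge⟩
    · exact (hAD _ hD hAD').elim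
  · exact ⟨y, hy, fun z hz => (hkA ⟨z, hz⟩).elim⟩

theorem IsOrbital.subset_of_forall_orbital_subset (hh : Continuous h) (hk : Homeo01 k) {C : Set ℝ}
    (hC : IsOrbital k C) (hinC : ∀ A, IsOrbital h A → (A ∩ C).Nonempty → A ⊆ C) {B : Set ℝ}
    (hB : IsOrbital ⇑⁅⁅h, k⁆, k⁆ B) (hBC : (B ∩ C).Nonempty) : B ⊆ C := by
  obtain ⟨c₁, c₂, hc, rfl, hkc₁, hkc₂⟩ := hk.isOrbital_exists_eq_Ioo hC
  have hhc₁ : h c₁ = c₁ := apply_eq_self_of_forall_orbital_subset hh.isOpen_supp hinC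
    (closure_Ioo hc.ne ▸ left_mem_Icc.2 hc.le) fun h' => h'.1.false
  have hhc₂ : h c₂ = c₂ := apply_eq_self_of_forall_orbital_subset hh.isOpen_supp hinC
    (closure_Ioo hc.ne ▸ right_mem_Icc.2 hc.le) fun h' => h'.2.false
  obtain ⟨y, hy, rfl⟩ := hB
  obtain ⟨z, hzB, hzC⟩ := hBC
  refine isPreconnected_connectedComponentIn.ordConnected.subset_Ioo hzB hzC ?_ ?_
  · exact fun h' => connectedComponentIn_subset _ _ h'
      (commutatorElement_commutatorElement_apply_eq_self_of_apply_eq hhc₁ hkc₁)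
  · exact fun h' => connectedComponentIn_subset _ _ h'
      (commutatorElement_commutatorElement_apply_eq_self_of_apply_eq hhc₂ hkc₂)

theorem exists_commutator_commutator_apply_eq_self_of_isOrbital (hh : PLHomeo h) (hk : PLHomeo k)
    {C : Set ℝ} (hCh : IsOrbital h C) (hCk : IsOrbital k C) : ∃ w ∈ C, ⁅⁅h, k⁆, k⁆ w = w := by
  obtain ⟨c₁, c₂, hc, rfl, hkc₁, -⟩ := hk.1.isOrbital_exists_eq_Ioo hCk
  have hhc₁ : h c₁ = c₁ := ((isOrbital_Ioo_iff hc).1 hCh).2.1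
  obtain ⟨s, hs⟩ := hh.2.hasLinearRightGermAt hh.1.1 hh.1.continuous hhc₁
  obtain ⟨t, ht⟩ := hk.2.hasLinearRightGermAt hk.1.1 hk.1.continuous hkc₁
  exact (((hs.commutatorElement ht).commutatorElement ht).eventually_eq_self.and
    (Ioo_mem_nhdsGT hc)).exists.imp fun w hw => ⟨hw.2, hw.1⟩

theorem mem_supp_of_commutator_commutator_apply_ne {H : Subgroup (Equiv.Perm ℝ)}
    (hH : ∀ g ∈ H, Homeo01 g) (hnc : ¬ HasTransitionChain2 H) (hhH : h ∈ H) (hkH : k ∈ H)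
    (hme : MutualEff h k) {y : ℝ} (hy : ⁅⁅h, k⁆, k⁆ y ≠ y) : y ∈ Supp k := by
  by_contra hyk
  have hyh : y ∈ Supp h := fun hyh => hy
    (commutatorElement_commutatorElement_apply_eq_self_of_apply_eq hyh (not_not.1 hyk))
  exact hy (commutator_commutator_apply_eq_self_of_forall_not_subset hH hnc hhH hkH hme
    (isOrbital_connectedComponentIn hyh)
    (fun D hD hAD => hyk (hD.subset_supp (hAD (mem_connectedComponentIn hyh))))
    (mem_connectedComponentIn hyh))

theorem IsOrbital.subset_of_commutator_commutator_apply_ne {H : Subgroup (Equiv.Perm ℝ)}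
    (hH : ∀ g ∈ H, Homeo01 g) (hnc : ¬ HasTransitionChain2 H) (hhH : h ∈ H) (hkH : k ∈ H)
    (hme : MutualEff h k) {C : Set ℝ} (hC : IsOrbital k C) {y : ℝ} (hyC : y ∈ C)
    (hy : ⁅⁅h, k⁆, k⁆ y ≠ y) {A : Set ℝ} (hA : IsOrbital h A) (hAC : (A ∩ C).Nonempty) :
    A ⊆ C := by
  rcases hA.subset_or_subset hH hnc hhH hkH hC hAC with hAC' | hCA
  · exact hAC'
  by_contra hAC'
  refine hy (commutator_commutator_apply_eq_self_of_forall_not_subset hH hnc hhH hkH hme hA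
    (fun D hD hAD => hAC' ?_) (hCA hyC))
  rwa [hC.eq_of_mem hD hyC (hAD (hCA hyC))]

theorem IsOrbital.exists_orbital_ssuperset_of_commutator_commutator {H : Subgroup (Equiv.Perm ℝ)}
    (hH : ∀ g ∈ H, PLHomeo g) (hnc : ¬ HasTransitionChain2 H) (hhH : h ∈ H) (hkH : k ∈ H)
    (hme : MutualEff h k) {B : Set ℝ} (hB : IsOrbital ⇑⁅⁅h, k⁆, k⁆ B) :
    ∃ C, IsOrbital k C ∧ B ⊂ C ∧ ∃ A, IsOrbital h A ∧ A ⊆ C := by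
  have hH' : ∀ g ∈ H, Homeo01 g := fun g hg => (hH g hg).1
  have hh := hH' h hhH
  have hk := hH' k hkH
  obtain ⟨y, hy, rfl⟩ := hB
  have hyk := mem_supp_of_commutator_commutator_apply_ne hH' hnc hhH hkH hme hy
  set C := connectedComponentIn (Supp k) y
  have hC : IsOrbital k C := isOrbital_connectedComponentIn hyk
  have hyC : y ∈ C := mem_connectedComponentIn hyk
  have hinC : ∀ A, IsOrbital h A → (A ∩ C).Nonempty → A ⊆ C := fun A =>
    hC.subset_of_commutator_commutator_apply_ne hH' hnc hhH hkH hme hyC hy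
  obtain ⟨z, hzC, hzh⟩ : ∃ z ∈ C, h z ≠ z := by
    by_contra! hfix
    exact hy (commutator_commutator_apply_eq_self_of_forall_apply_eq hk hC hfix hyC)
  have hA := isOrbital_connectedComponentIn hzh
  have hzA := mem_connectedComponentIn (show z ∈ Supp h from hzh)
  have hAC := hinC _ hA ⟨z, hzA, hzC⟩
  have hBC := hC.subset_of_forall_orbital_subset hh.continuous hk hinC ⟨y, hy, rfl⟩
    ⟨y, mem_connectedComponentIn hy, hyC⟩
  refine ⟨C, hC, hBC.ssubset_of_ne fun hBC' => ?_, _, hA, hAC⟩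
  rcases hAC.eq_or_ssubset with hAC' | hAC'
  · obtain ⟨w, hwC, hw⟩ := exists_commutator_commutator_apply_eq_self_of_isOrbital (hH h hhH)
      (hH k hkH) (hAC' ▸ hA) hC
    exact connectedComponentIn_subset _ _ (hBC'.symm.subset hwC) hw
  · have hAf := isOrbital_commutator_commutator_of_ssubset hh hk hme hA hC hAC'
    exact hAC'.ne ((hAf.eq_of_mem ⟨y, hy, rfl⟩ hzA (hBC'.symm.subset (hAC hzA))).trans hBC')

end Commutator

theorem stmt16 (H : Subgroup (Equiv.Perm ℝ)) (hH : ∀ g ∈ H, PLHomeo g)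
    (hnc : ¬ HasTransitionChain2 H) (h k : Equiv.Perm ℝ) (hh : h ∈ H) (hk : k ∈ H)
    (hme : MutualEff h k) :
    (∀ A C : Set ℝ, IsOrbital ⇑h A → IsOrbital ⇑k C → A ⊂ C → IsOrbital ⇑⁅⁅h, k⁆, k⁆ A) ∧
    (∀ B : Set ℝ, IsOrbital ⇑⁅⁅h, k⁆, k⁆ B →
      ∃ C, IsOrbital ⇑k C ∧ B ⊂ C ∧ ∃ A, IsOrbital ⇑h A ∧ A ⊆ C) :=
  ⟨fun _ _ hA hC hAC =>
    isOrbital_commutator_commutator_of_ssubset (hH h hh).1 (hH k hk).1 hme hA hC hAC,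
  fun _ hB => hB.exists_orbital_ssuperset_of_commutator_commutator hH hnc hh hk hme⟩
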